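/- arXiv:1307.1192 — 6 statements merged into one kernel-verified Lean document; each statement's English description precedes it below -/
import Mathlib

section
/- Let w ∈ Δ_m with w_i > 0 for all i, let g ∈ ℝ^m, and let α ≥ 0. Then the minimizer over Δ_m of the function x ↦ α g^T x + D(x, w), where D is the Bregman distance of the entropy function, is the multiplicative-weights update x̄ given by x̄_i = w_i exp(−α g_i) / ∑_{l=1}^m w_l exp(−α g_l) for i = 1, …, m. -/
/-- **The multiplicative weights update solves the entropy-prox subproblem.**
Let `w ∈ Δₘ` with `w i > 0` for all `i`, `g ∈ ℝᵐ` and `α ≥ 0`.  With the entropy function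
`e(x) = ∑ i, x i · ln (x i) + ln m`, whose gradient is `∇e(y) i = 1 + ln (y i)`, and the
Bregman distance `D x y = e x - e y - ∇e(y)ᵀ(x - y)`, the point `x̄` with
`x̄ i = w i · exp (-α · g i) / ∑ l, w l · exp (-α · g l)` lies in `Δₘ` and minimizes
`x ↦ α · gᵀx + D x w` over `Δₘ`. -/
theorem multiplicative_weights_update {m : ℕ} (hm : 0 < m)
    (w : Fin m → ℝ) (hw : (∑ i, w i) = 1) (hwpos : ∀ i, 0 < w i)
    (g : Fin m → ℝ) (α : ℝ) (hα : 0 ≤ α)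
    (ent : (Fin m → ℝ) → ℝ)
    (hent : ∀ x, ent x = (∑ i, x i * Real.log (x i)) + Real.log m)
    (D : (Fin m → ℝ) → (Fin m → ℝ) → ℝ)
    (hD : ∀ x y, D x y = ent x - ent y - ∑ i, (1 + Real.log (y i)) * (x i - y i))
    (xbar : Fin m → ℝ)
    (hxbar : ∀ i, xbar i = w i * Real.exp (-(α * g i)) / ∑ l, w l * Real.exp (-(α * g l))) :
    ((∑ i, xbar i) = 1 ∧ ∀ i, 0 ≤ xbar i) ∧
      ∀ x : Fin m → ℝ, ((∑ i, x i) = 1 ∧ ∀ i, 0 ≤ x i) →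
        α * (∑ i, g i * xbar i) + D xbar w ≤ α * (∑ i, g i * x i) + D x w := by
  have hne : Nonempty (Fin m) := ⟨⟨0, hm⟩⟩
  set Z : ℝ := ∑ l, w l * Real.exp (-(α * g l)) with hZ
  have hZpos : 0 < Z :=
    Finset.sum_pos (fun l _ => mul_pos (hwpos l) (Real.exp_pos _)) Finset.univ_nonempty
  have hxpos : ∀ i, 0 < xbar i := by
    intro i
    rw [hxbar i]
    exact div_pos (mul_pos (hwpos i) (Real.exp_pos _)) hZpos
  have hsum : (∑ i, xbar i) = 1 := by
    simp_rw [hxbar]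
    rw [← Finset.sum_div, ← hZ, div_self hZpos.ne']
  have hlog : ∀ i, Real.log (xbar i) = Real.log (w i) - α * g i - Real.log Z := by
    intro i
    rw [hxbar i, Real.log_div (mul_pos (hwpos i) (Real.exp_pos _)).ne' hZpos.ne',
      Real.log_mul (hwpos i).ne' (Real.exp_ne_zero _), Real.log_exp]
    ring
  refine ⟨⟨hsum, fun i => (hxpos i).le⟩, ?_⟩
  rintro x ⟨hx1, hx0⟩
  -- pointwise convexity inequality
  have point : ∀ t s : ℝ, 0 ≤ t → 0 < s → t * Real.log s + t - s ≤ t * Real.log t := by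
    intro t s ht hs
    rcases eq_or_lt_of_le ht with h | h
    · rw [← h]; simp; linarith
    · have hlt := Real.log_le_sub_one_of_pos (div_pos hs h)
      rw [Real.log_div hs.ne' h.ne'] at hlt
      have h2 := mul_le_mul_of_nonneg_left hlt h.le
      have h3 : t * (s / t) = s := by field_simp
      nlinarith
  have per : ∀ i ∈ Finset.univ, (xbar i * Real.log (xbar i) + α * (g i * xbar i)
        - Real.log (w i) * xbar i - xbar i) - Real.log Z * (x i - xbar i)
      ≤ x i * Real.log (x i) + α * (g i * x i) - Real.log (w i) * x i - x i := by
    intro i _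
    have h1 := point (x i) (xbar i) (hx0 i) (hxpos i)
    rw [hlog i] at h1 ⊢
    nlinarith [h1]
  have hsumle := Finset.sum_le_sum per
  rw [Finset.sum_sub_distrib] at hsumle
  have hz0 : ∑ i, Real.log Z * (x i - xbar i) = 0 := by
    rw [← Finset.mul_sum, Finset.sum_sub_distrib, hx1, hsum]; ring
  rw [hz0, sub_zero] at hsumle
  have split : ∀ y : Fin m → ℝ,
      ∑ i, (y i * Real.log (y i) + α * (g i * y i) - Real.log (w i) * y i - y i)
      = (∑ i, y i * Real.log (y i)) + α * (∑ i, g i * y i)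
        - (∑ i, Real.log (w i) * y i) - (∑ i, y i) := by
    intro y
    rw [Finset.sum_sub_distrib, Finset.sum_sub_distrib, Finset.sum_add_distrib, Finset.mul_sum]
  rw [split, split] at hsumle
  have E1 : ∀ y : Fin m → ℝ, ∑ i, (1 + Real.log (w i)) * (y i - w i)
      = (∑ i, y i) + (∑ i, Real.log (w i) * y i) - (∑ i, w i)
        - (∑ i, Real.log (w i) * w i) := by
    intro y
    calc ∑ i, (1 + Real.log (w i)) * (y i - w i)
        = ∑ i, (y i + Real.log (w i) * y i - Real.log (w i) * w i - w i) :=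
          Finset.sum_congr rfl fun i _ => by ring
      _ = _ := by
          rw [Finset.sum_sub_distrib, Finset.sum_sub_distrib, Finset.sum_add_distrib]; ring
  simp only [hD, hent, E1]
  linarith [hsumle]
end

section
/- For all k ≥ 1 with ∑_{i=0}^{k−1} α_i > 0, the AdaBoost sequences satisfy: min_{i ∈ {0,...,k−1}} ‖∇L(λ̂^i)‖_∞ − p(λ^k) ≤ ( ln(m) + (1/2) ∑_{i=0}^{k−1} α_i^2 ) / ( ∑_{i=0}^{k−1} α_i ), where λ̂^i := ∑_{t=0}^{i−1} α_t e_{j_t} and λ^k := λ̂^k / ∑_{i=0}^{k−1} α_i. -/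
/-- Positivity of `cosh t - r * sinh t` for `|r| ≤ 1`. -/
lemma cosh_sub_mul_sinh_pos {r : ℝ} (hr : |r| ≤ 1) (x : ℝ) :
    0 < Real.cosh x - r * Real.sinh x := by
  have h1 : r * Real.sinh x ≤ |r * Real.sinh x| := le_abs_self _
  have h2 : |r * Real.sinh x| ≤ Real.sinh |x| := by
    rw [abs_mul, ← Real.abs_sinh]
    exact mul_le_of_le_one_left (abs_nonneg _) hr
  have h3 : Real.sinh |x| < Real.cosh |x| := by
    nlinarith [Real.cosh_sub_sinh (|x|), Real.exp_pos (-|x|)]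
  rw [Real.cosh_abs] at h3
  linarith

/-- Two-point Hoeffding lemma. -/
lemma hoeff_two_point {r : ℝ} (hr : |r| ≤ 1) {t : ℝ} (ht : 0 ≤ t) :
    Real.log (Real.cosh t - r * Real.sinh t) ≤ -(r * t) + t ^ 2 / 2 := by
  have hc := cosh_sub_mul_sinh_pos hr
  set φ : ℝ → ℝ := fun x => (Real.sinh x - r * Real.cosh x) / (Real.cosh x - r * Real.sinh x)
    with hφdef
  have hdenom : ∀ x : ℝ, HasDerivAt (fun y => Real.cosh y - r * Real.sinh y)
      (Real.sinh x - r * Real.cosh x) x := fun x =>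
    (Real.hasDerivAt_cosh x).sub ((Real.hasDerivAt_sinh x).const_mul r)
  have hnum : ∀ x : ℝ, HasDerivAt (fun y => Real.sinh y - r * Real.cosh y)
      (Real.cosh x - r * Real.sinh x) x := fun x =>
    (Real.hasDerivAt_sinh x).sub ((Real.hasDerivAt_cosh x).const_mul r)
  have hdφ : ∀ x, HasDerivAt φ (1 - φ x ^ 2) x := by
    intro x
    have h := (hnum x).div (hdenom x) (ne_of_gt (hc x))
    refine h.congr_deriv ?_
    have hcx := hc x
    simp only [hφdef]
    field_simp
  -- ψ is monotone, ψ 0 = 0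
  set ψ : ℝ → ℝ := fun x => x - r - φ x with hψdef
  have hdψ : ∀ x, HasDerivAt ψ (φ x ^ 2) x := by
    intro x
    have h := ((hasDerivAt_id x).sub_const r).sub (hdφ x)
    refine h.congr_deriv ?_; ring
  have hψ0 : ψ 0 = 0 := by
    simp [hψdef, hφdef, Real.sinh_zero, Real.cosh_zero]
  have hψmono : Monotone ψ :=
    monotone_of_deriv_nonneg (fun x => (hdψ x).differentiableAt)
      (fun x => by rw [(hdψ x).deriv]; positivity)
  have hψnonneg : ∀ x : ℝ, 0 ≤ x → 0 ≤ ψ x := fun x hx => hψ0 ▸ hψmono hx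
  -- f is antitone on [0, ∞), f 0 = 0
  set f : ℝ → ℝ := fun x => Real.log (Real.cosh x - r * Real.sinh x) + r * x - x ^ 2 / 2
    with hfdef
  have hdf : ∀ x, HasDerivAt f (-(ψ x)) x := by
    intro x
    have hlog : HasDerivAt (fun y => Real.log (Real.cosh y - r * Real.sinh y))
        ((Real.sinh x - r * Real.cosh x) / (Real.cosh x - r * Real.sinh x)) x :=
      (hdenom x).log (ne_of_gt (hc x))
    have h := (hlog.add ((hasDerivAt_id x).const_mul r)).sub
      ((hasDerivAt_pow 2 x).div_const 2)
    refine h.congr_deriv ?_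
    simp [hψdef, hφdef]
    ring
  have hfanti : AntitoneOn f (Set.Ici (0 : ℝ)) := by
    apply antitoneOn_of_deriv_nonpos (convex_Ici 0)
      (fun x _ => (hdf x).differentiableAt.continuousAt.continuousWithinAt)
      (fun x _ => (hdf x).differentiableAt.differentiableWithinAt)
    intro x hx
    rw [(hdf x).deriv]
    simp only [interior_Ici, Set.mem_Ioi] at hx
    linarith [hψnonneg x hx.le]
  have hf0 : f 0 = 0 := by simp [hfdef]
  have := hfanti (Set.self_mem_Ici) (Set.mem_Ici.mpr ht) ht
  rw [hf0] at this
  simp only [hfdef] at this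
  linarith

/-- Convexity bound: `exp (-(t*x)) ≤ cosh t - x * sinh t` for `|x| ≤ 1`. -/
lemma exp_le_cosh_sub {x : ℝ} (hx : |x| ≤ 1) (t : ℝ) :
    Real.exp (-(t * x)) ≤ Real.cosh t - x * Real.sinh t := by
  obtain ⟨hx1, hx2⟩ := abs_le.mp hx
  have h := convexOn_exp.2 (Set.mem_univ t) (Set.mem_univ (-t))
    (by linarith : (0:ℝ) ≤ (1 - x) / 2) (by linarith : (0:ℝ) ≤ (1 + x) / 2) (by ring)
  simp only [smul_eq_mul] at h
  have e1 : (1 - x) / 2 * t + (1 + x) / 2 * (-t) = -(t * x) := by ring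
  rw [e1] at h
  rw [Real.cosh_eq, Real.sinh_eq]
  linarith [h]

/-- The gradient of the log-exponential loss `L(λ) = ln((1/m) ∑ i, exp (-(Aλ) i))`:
`(∇L(λ)) j = (∑ i, -A i j · exp (-(Aλ) i)) / (∑ l, exp (-(Aλ) l))`. -/
noncomputable def gradLogExpLoss {m n : ℕ} (A : Matrix (Fin m) (Fin n) ℝ)
    (lam : Fin n → ℝ) : Fin n → ℝ :=
  fun j => (∑ i, -A i j * Real.exp (-(A.mulVec lam) i)) / ∑ l, Real.exp (-(A.mulVec lam) l)

/-- The `ℓ∞` norm `‖v‖∞ = max_j |v j|`. -/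
noncomputable def linfNorm {p : ℕ} (v : Fin p → ℝ) : ℝ := ⨆ j, |v j|

/-- **Complexity of AdaBoost (general step-sizes).**
With the AdaBoost iterates `w k`, `jseq k`, step-sizes `α k ≥ 0`, un-normalized
coefficient vectors `λ̂ᵏ = ∑_{i<k} α i • e_{jseq i}` and normalizations
`λᵏ = λ̂ᵏ / ∑_{i<k} α i`, for all `k ≥ 1` with `∑_{i<k} α i > 0`:
`min_{i ∈ {0,…,k-1}} ‖∇L(λ̂ⁱ)‖∞ - p(λᵏ) ≤ (ln m + (1/2) ∑_{i<k} (α i)²) / (∑_{i<k} α i)`,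
where `L` is the log-exponential loss and `p(λ) = min_i (Aλ) i` is the margin. -/
theorem adaboost_complexity_general {m n : ℕ} (hm : 0 < m) (hn : 0 < n)
    (A : Matrix (Fin m) (Fin n) ℝ) (hA : ∀ i j, |A i j| ≤ 1)
    -- the set of base classifiers (columns of `A`) is closed under negation
    (hneg : ∀ j : Fin n, ∃ j' : Fin n, ∀ i, A i j' = -A i j)
    -- the AdaBoost iterates
    (w : ℕ → Fin m → ℝ) (jseq : ℕ → Fin n) (α : ℕ → ℝ)
    (hw0 : ∀ i, w 0 i = 1 / m)
    (hj : ∀ k l, (∑ i, w k i * A i l) ≤ ∑ i, w k i * A i (jseq k))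
    (hα : ∀ k, 0 ≤ α k)
    (hw : ∀ k i, w (k + 1) i = w k i * Real.exp (-(α k * A i (jseq k))) /
        ∑ l, w k l * Real.exp (-(α k * A l (jseq k))))
    -- the un-normalized coefficient vectors `λ̂ᵏ` and their normalizations `λᵏ`
    (lamhat : ℕ → Fin n → ℝ)
    (hlamhat : ∀ k, lamhat k =
      ∑ i ∈ Finset.range k, α i • (Pi.single (jseq i) (1 : ℝ) : Fin n → ℝ))
    (lam : ℕ → Fin n → ℝ)
    (hlam : ∀ k, lam k = (∑ i ∈ Finset.range k, α i)⁻¹ • lamhat k)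
    -- the claimed bound
    (k : ℕ) (hk : 1 ≤ k) (hsum : 0 < ∑ i ∈ Finset.range k, α i) :
    (Finset.range k).inf' (Finset.nonempty_range_iff.mpr (by omega))
        (fun i => linfNorm (gradLogExpLoss A (lamhat i))) -
      (⨅ i, (A.mulVec (lam k)) i) ≤
      (Real.log m + (1 / 2) * ∑ i ∈ Finset.range k, (α i) ^ 2) /
        (∑ i ∈ Finset.range k, α i) := by
    classical
  haveI : NeZero m := ⟨hm.ne'⟩
  haveI : NeZero n := ⟨hn.ne'⟩
  -- B t i = (A λ̂ᵗ)_i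
  set B : ℕ → Fin m → ℝ := fun t i => ∑ s ∈ Finset.range t, α s * A i (jseq s) with hBdef
  have hB : ∀ t, A.mulVec (lamhat t) = B t := by
    intro t
    induction t with
    | zero =>
      rw [hlamhat 0]
      simp [hBdef, Matrix.mulVec_zero]
      rfl
    | succ t ih =>
      have h1 : lamhat (t + 1) = lamhat t + α t • (Pi.single (jseq t) (1 : ℝ) : Fin n → ℝ) := by
        rw [hlamhat (t + 1), hlamhat t, Finset.sum_range_succ]
      rw [h1, Matrix.mulVec_add, ih, Matrix.mulVec_smul, Matrix.mulVec_single]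
      funext i
      simp [hBdef, Finset.sum_range_succ]
  -- Z t = ∑ exp(-(B t i))
  set Z : ℕ → ℝ := fun t => ∑ i, Real.exp (-(B t i)) with hZdef
  have hZpos : ∀ t, 0 < Z t :=
    fun t => Finset.sum_pos (fun i _ => Real.exp_pos _) Finset.univ_nonempty
  have hBsucc : ∀ t i, B (t + 1) i = B t i + α t * A i (jseq t) := by
    intro t i; simp [hBdef, Finset.sum_range_succ]
  -- closed form for w
  have hwf : ∀ t i, w t i = Real.exp (-(B t i)) / Z t := by
    intro t
    induction t with
    | zero =>
      intro i
      have hB0 : ∀ i, B 0 i = 0 := by intro i; simp [hBdef]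
      have hZ0 : Z 0 = m := by
        simp [hZdef, hB0, Finset.sum_const, Finset.card_univ]
      rw [hw0 i, hZ0, hB0 i]
      simp
    | succ t ih =>
      intro i
      rw [hw t i]
      have key : ∀ l, w t l * Real.exp (-(α t * A l (jseq t)))
          = Real.exp (-(B (t + 1) l)) / Z t := by
        intro l
        rw [ih l, hBsucc t l, neg_add, Real.exp_add]
        ring
      rw [key i]
      have hden : ∑ l, w t l * Real.exp (-(α t * A l (jseq t))) = Z (t + 1) / Z t := by
        rw [Finset.sum_congr rfl (fun l _ => key l), ← Finset.sum_div]
      rw [hden]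
      have h1 := (hZpos t).ne'
      have h2 := (hZpos (t + 1)).ne'
      field_simp
  have hwpos : ∀ t i, 0 < w t i := by
    intro t i; rw [hwf t i]; exact div_pos (Real.exp_pos _) (hZpos t)
  have hwsum : ∀ t, ∑ i, w t i = 1 := by
    intro t
    rw [Finset.sum_congr rfl (fun i _ => hwf t i), ← Finset.sum_div]
    exact div_self (hZpos t).ne'
  -- edge weights r t
  set r : ℕ → ℝ := fun t => ∑ i, w t i * A i (jseq t) with hrdef
  have hrabs : ∀ t, |r t| ≤ 1 := by
    intro t
    calc |r t| ≤ ∑ i, |w t i * A i (jseq t)| := Finset.abs_sum_le_sum_abs _ _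
    _ ≤ ∑ i, w t i := by
        apply Finset.sum_le_sum
        intro i _
        rw [abs_mul, abs_of_pos (hwpos t i)]
        exact mul_le_of_le_one_right (hwpos t i).le (hA i _)
    _ = 1 := hwsum t
  -- one-step decrease
  have hstep : ∀ t, Real.log (Z (t + 1)) ≤ Real.log (Z t) - α t * r t + (α t) ^ 2 / 2 := by
    intro t
    set T : ℝ := ∑ i, w t i * Real.exp (-(α t * A i (jseq t))) with hTdef
    have hTpos : 0 < T :=
      Finset.sum_pos (fun i _ => mul_pos (hwpos t i) (Real.exp_pos _)) Finset.univ_nonempty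
    have hZT : Z (t + 1) = Z t * T := by
      simp only [hZdef, hTdef]
      rw [Finset.mul_sum]
      apply Finset.sum_congr rfl
      intro i _
      rw [hwf t i, hBsucc t i, neg_add, Real.exp_add]
      field_simp
      exact (div_self (hZpos t).ne').symm
    have hTle : T ≤ Real.cosh (α t) - r t * Real.sinh (α t) := by
      calc T ≤ ∑ i, w t i * (Real.cosh (α t) - A i (jseq t) * Real.sinh (α t)) := by
            apply Finset.sum_le_sum
            intro i _
            exact mul_le_mul_of_nonneg_left (exp_le_cosh_sub (hA i _) (α t)) (hwpos t i).le
        _ = (∑ i, w t i) * Real.cosh (α t) - (∑ i, w t i * A i (jseq t)) * Real.sinh (α t) := by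
            rw [Finset.sum_mul, Finset.sum_mul, ← Finset.sum_sub_distrib]
            apply Finset.sum_congr rfl
            intro i _; ring
        _ = Real.cosh (α t) - r t * Real.sinh (α t) := by rw [hwsum t, one_mul]
    have hlogT : Real.log T ≤ -(r t * α t) + (α t) ^ 2 / 2 := by
      calc Real.log T ≤ Real.log (Real.cosh (α t) - r t * Real.sinh (α t)) :=
            Real.log_le_log hTpos hTle
        _ ≤ -(r t * α t) + (α t) ^ 2 / 2 := hoeff_two_point (hrabs t) (hα t)
    rw [hZT, Real.log_mul (hZpos t).ne' hTpos.ne']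
    linarith
  -- telescoped bound
  have htel : ∀ t, Real.log (Z t) ≤ Real.log m
      - (∑ s ∈ Finset.range t, α s * r s) + (∑ s ∈ Finset.range t, (α s) ^ 2) / 2 := by
    intro t
    induction t with
    | zero =>
      have hB0 : ∀ i, B 0 i = 0 := by intro i; simp [hBdef]
      have hZ0 : Z 0 = m := by simp [hZdef, hB0, Finset.sum_const, Finset.card_univ]
      simp [hZ0]
    | succ t ih =>
      have := hstep t
      rw [Finset.sum_range_succ, Finset.sum_range_succ]
      linarith
  -- the minimizer of B k
  obtain ⟨i0, -, hi0⟩ := Finset.exists_min_image Finset.univ (B k) ⟨⟨0, hm⟩, Finset.mem_univ _⟩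
  have hi0' : ∀ i, B k i0 ≤ B k i := fun i => hi0 i (Finset.mem_univ i)
  -- log Z k ≥ -(B k i0)
  have hlower : -(B k i0) ≤ Real.log (Z k) := by
    have h1 : Real.exp (-(B k i0)) ≤ Z k := by
      rw [hZdef]
      exact Finset.single_le_sum (f := fun i => Real.exp (-(B k i)))
        (fun i _ => (Real.exp_pos _).le) (Finset.mem_univ i0)
    calc -(B k i0) = Real.log (Real.exp (-(B k i0))) := (Real.log_exp _).symm
      _ ≤ Real.log (Z k) := Real.log_le_log (Real.exp_pos _) h1
  -- the margin
  set S : ℝ := ∑ i ∈ Finset.range k, α i with hSdef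
  have hmulVeclam : ∀ i, A.mulVec (lam k) i = S⁻¹ * B k i := by
    intro i
    rw [hlam k, Matrix.mulVec_smul, hB k]
    simp [hSdef]
  have hmargin : (⨅ i, A.mulVec (lam k) i) = S⁻¹ * B k i0 := by
    apply le_antisymm
    · exact ciInf_le (Finite.bddBelow_range _) i0 |>.trans_eq (hmulVeclam i0)
    · apply le_ciInf
      intro i
      rw [hmulVeclam i]
      exact mul_le_mul_of_nonneg_left (hi0' i) (inv_nonneg.mpr hsum.le)
  -- M ≤ r t
  set M : ℝ := (Finset.range k).inf' (Finset.nonempty_range_iff.mpr (by omega))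
      (fun i => linfNorm (gradLogExpLoss A (lamhat i))) with hMdef
  have hgrad : ∀ t (j : Fin n), gradLogExpLoss A (lamhat t) j = -(∑ i, w t i * A i j) := by
    intro t j
    rw [gradLogExpLoss, hB t]
    rw [div_eq_iff (hZpos t).ne']
    rw [show ((-∑ i, w t i * A i j) * Z t) = ∑ i, -(w t i * A i j * Z t) by
      rw [neg_mul, Finset.sum_mul, ← Finset.sum_neg_distrib]]
    apply Finset.sum_congr rfl
    intro i _
    rw [hwf t i]
    field_simp
    rw [mul_div_cancel_right₀ _ (hZpos t).ne']
  have hlinf : ∀ t, linfNorm (gradLogExpLoss A (lamhat t)) ≤ r t := by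
    intro t
    apply ciSup_le
    intro j
    rw [hgrad t j, abs_neg, abs_le]
    constructor
    · rw [neg_le]
      obtain ⟨j', hj'⟩ := hneg j
      have e : -∑ i, w t i * A i j = ∑ i, w t i * A i j' := by
        rw [← Finset.sum_neg_distrib]
        apply Finset.sum_congr rfl
        intro i _
        rw [hj' i]; ring
      rw [e]
      exact hj t j'
    · exact hj t j
  have hMle : ∀ t ∈ Finset.range k, M ≤ r t := by
    intro t ht
    exact (Finset.inf'_le _ ht).trans (hlinf t)
  -- combine
  have hsum1 : M * S ≤ ∑ s ∈ Finset.range k, α s * r s := by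
    rw [hSdef, Finset.mul_sum]
    apply Finset.sum_le_sum
    intro s hs
    rw [mul_comm M (α s)]
    exact mul_le_mul_of_nonneg_left (hMle s hs) (hα s)
  have hkey : ∑ s ∈ Finset.range k, α s * r s ≤ Real.log m
      + (∑ s ∈ Finset.range k, (α s) ^ 2) / 2 + B k i0 := by
    have := htel k
    linarith
  rw [hmargin, le_div_iff₀ hsum]
  have hSnz : S ≠ 0 := hsum.ne'
  have e : (M - S⁻¹ * B k i0) * S = M * S - B k i0 := by
    field_simp
  rw [e]
  linarith
end

section
/- The FS_ε algorithm is an instance of subgradient descent on the residual space: for every k ≥ 0, the FS_ε iterates satisfy r^k = y − Xβ^k (so r^k ∈ P_res := { r ∈ ℝ^n : r = y − Xβ for some β ∈ ℝ^p }), the vector g^k := sgn((r^k)^T X_{j_k}) X_{j_k} is a subgradient at r^k of f(r) := ‖X^T r‖_∞, and r^{k+1} = Π_{P_res}(r^k − ε g^k), where Π_{P_res} denotes Euclidean projection onto P_res. -/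
/-- The Euclidean norm `‖v‖₂ = √(∑ i, v i ²)` on `ℝⁿ`. -/
noncomputable def l2Norm {n : ℕ} (v : Fin n → ℝ) : ℝ := Real.sqrt (∑ i, v i ^ 2)

lemma sign_mul_self_eq_abs (s : ℝ) : Real.sign s * s = |s| := by
  rcases lt_trichotomy s 0 with h | h | h
  · rw [Real.sign_of_neg h, abs_of_neg h]; ring
  · simp [h]
  · rw [Real.sign_of_pos h, abs_of_pos h]; ring

lemma sign_mul_le_abs (s t : ℝ) : Real.sign s * t ≤ |t| := by
  calc Real.sign s * t ≤ |Real.sign s * t| := le_abs_self _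
    _ = |Real.sign s| * |t| := abs_mul _ _
    _ ≤ 1 * |t| := by
        apply mul_le_mul_of_nonneg_right _ (abs_nonneg t)
        rcases lt_trichotomy s 0 with h | h | h <;>
          simp [Real.sign_of_neg, Real.sign_of_pos, h]
    _ = |t| := one_mul _

/-- **FS_ε is an instance of subgradient descent on the residual space.**
With the FS_ε iterates (`r 0 = y`, `β 0 = 0`, `jseq k ∈ argmax_j |(r k)ᵀ X_j|`,
`r (k+1) = r k - ε · sgn((r k)ᵀ X_{jseq k}) • X_{jseq k}` and the corresponding coefficient
updates), for every `k ≥ 0`: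
(a) `r k = y - X (β k)`, so `r k` lies in the residual space
    `P_res = {v : v = y - Xβ for some β}`;
(b) `g k = sgn((r k)ᵀ X_{jseq k}) • X_{jseq k}` is a subgradient at `r k` of
    `f(r) = ‖Xᵀ r‖∞`;
(c) `r (k+1)` is the Euclidean projection `Π_{P_res} (r k - ε • g k)`, i.e. it lies in
    `P_res` and is closest (in `‖·‖₂`) to `r k - ε • g k` among all points of `P_res`. -/
theorem FSeps_is_subgradient_descent {n p : ℕ}
    (X : Matrix (Fin n) (Fin p) ℝ) (y : Fin n → ℝ)
    (ε : ℝ) (hε : 0 < ε)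
    -- the FS_ε iterates
    (r : ℕ → Fin n → ℝ) (β : ℕ → Fin p → ℝ) (jseq : ℕ → Fin p)
    (hr0 : r 0 = y) (hβ0 : β 0 = 0)
    (hjseq : ∀ k j, |∑ i, r k i * X i j| ≤ |∑ i, r k i * X i (jseq k)|)
    (hrup : ∀ k, r (k + 1) =
      r k - (ε * Real.sign (∑ i, r k i * X i (jseq k))) • (fun i => X i (jseq k)))
    (hβup1 : ∀ k, β (k + 1) (jseq k) =
      β k (jseq k) + ε * Real.sign (∑ i, r k i * X i (jseq k)))
    (hβup2 : ∀ k, ∀ j ≠ jseq k, β (k + 1) j = β k j)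
    (k : ℕ) :
    -- (a) the residual identity
    (r k = y - X.mulVec (β k)) ∧
    -- (b) the subgradient property
    (∀ r' : Fin n → ℝ,
      (⨆ j, |∑ i, r' i * X i j|) ≥
        (⨆ j, |∑ i, r k i * X i j|) +
          Real.sign (∑ i, r k i * X i (jseq k)) * ∑ i, X i (jseq k) * (r' i - r k i)) ∧
    -- (c) the projection property
    ((∃ b : Fin p → ℝ, r (k + 1) = y - X.mulVec b) ∧
      ∀ z : Fin n → ℝ, (∃ b : Fin p → ℝ, z = y - X.mulVec b) →
        l2Norm (r (k + 1) -
            (r k - (ε * Real.sign (∑ i, r k i * X i (jseq k))) • (fun i => X i (jseq k)))) ≤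
          l2Norm (z -
            (r k - (ε * Real.sign (∑ i, r k i * X i (jseq k))) • (fun i => X i (jseq k))))) := by
  rcases Nat.eq_zero_or_pos p with hp | hp
  · subst hp; exact (jseq 0).elim0
  have : NeZero p := ⟨hp.ne'⟩
  -- (a) by induction
  have key : ∀ m, r m = y - X.mulVec (β m) := by
    intro m
    induction m with
    | zero => simp [hr0, hβ0, Matrix.mulVec_zero]
    | succ m ih =>
      have hmul : X.mulVec (β (m + 1)) =
          X.mulVec (β m) +
            (ε * Real.sign (∑ i, r m i * X i (jseq m))) • (fun i => X i (jseq m)) := by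
        funext i
        have hterm : ∀ j, X i j * β (m + 1) j =
            X i j * β m j + (if j = jseq m then X i j * (ε * Real.sign (∑ i, r m i * X i (jseq m))) else 0) := by
          intro j
          by_cases hj : j = jseq m
          · subst hj; rw [hβup1 m]; simp; ring
          · rw [hβup2 m j hj]; simp [hj]
        simp only [Matrix.mulVec, dotProduct, Pi.add_apply, Pi.smul_apply,
          smul_eq_mul]
        rw [Finset.sum_congr rfl fun j _ => hterm j, Finset.sum_add_distrib,
          Finset.sum_ite_eq' Finset.univ (jseq m) (fun j => X i j * (ε * Real.sign (∑ i, r m i * X i (jseq m))))]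
        simp [mul_comm]
      rw [hrup m, hmul, ih]
      funext i
      simp
      ring
  refine ⟨key k, ?_, ?_⟩
  · -- (b)
    intro r'
    set s := ∑ i, r k i * X i (jseq k) with hs
    have hbdd : ∀ (w : Fin n → ℝ), BddAbove (Set.range fun j => |∑ i, w i * X i j|) :=
      fun w => (Set.finite_range _).bddAbove
    have hsup : (⨆ j, |∑ i, r k i * X i j|) = |s| :=
      le_antisymm (ciSup_le (hjseq k)) (le_ciSup (hbdd _) (jseq k))
    have hcalc : |s| + Real.sign s * ∑ i, X i (jseq k) * (r' i - r k i)
        = Real.sign s * ∑ i, r' i * X i (jseq k) := by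
      rw [← sign_mul_self_eq_abs s, ← mul_add, hs, ← Finset.sum_add_distrib]
      congr 1
      apply Finset.sum_congr rfl
      intro i _
      ring
    rw [ge_iff_le, hsup, hcalc]
    calc Real.sign s * ∑ i, r' i * X i (jseq k) ≤ |∑ i, r' i * X i (jseq k)| :=
          sign_mul_le_abs _ _
      _ ≤ ⨆ j, |∑ i, r' i * X i j| := le_ciSup (hbdd r') (jseq k)
  · -- (c)
    refine ⟨⟨β (k + 1), key (k + 1)⟩, ?_⟩
    intro z _
    have h0 : r (k + 1) -
        (r k - (ε * Real.sign (∑ i, r k i * X i (jseq k))) • (fun i => X i (jseq k))) = 0 := by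
      rw [hrup k]; simp
    rw [h0]
    have : l2Norm (0 : Fin n → ℝ) = 0 := by simp [l2Norm]
    rw [this]
    exact Real.sqrt_nonneg _
end

section
/- Let β_LS be any least-squares solution, i.e., β_LS ∈ argmin_β ‖y − Xβ‖_2^2. Then for any k ≥ 0, the FS_ε iterates with constant shrinkage factor ε > 0 satisfy: min_{i ∈ {0,...,k}} ‖X^T r^i‖_∞ ≤ ‖Xβ_LS‖_2^2 / (2ε(k+1)) + ε‖X‖_{1,2}^2 / 2, where ‖X‖_{1,2} := max_{j ∈ {1,…,p}} ‖X_j‖_2. -/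
/-- **Complexity of FS_ε (constant shrinkage factor).**
Let `β_LS` be any least-squares solution, i.e. a minimizer of `‖y - Xβ‖₂²`.  Then for any
`k ≥ 0`, the FS_ε iterates with constant shrinkage factor `ε > 0` satisfy
`min_{i ∈ {0,…,k}} ‖Xᵀ rⁱ‖∞ ≤ ‖X β_LS‖₂² / (2ε(k+1)) + ε ‖X‖₁,₂² / 2`, where
`‖X‖₁,₂ = max_j ‖X_j‖₂`. -/
theorem FSeps_complexity {n p : ℕ}
    (X : Matrix (Fin n) (Fin p) ℝ) (y : Fin n → ℝ)
    (ε : ℝ) (hε : 0 < ε)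
    -- the FS_ε iterates
    (r : ℕ → Fin n → ℝ) (β : ℕ → Fin p → ℝ) (jseq : ℕ → Fin p)
    (hr0 : r 0 = y) (hβ0 : β 0 = 0)
    (hjseq : ∀ k j, |∑ i, r k i * X i j| ≤ |∑ i, r k i * X i (jseq k)|)
    (hrup : ∀ k, r (k + 1) =
      r k - (ε * Real.sign (∑ i, r k i * X i (jseq k))) • (fun i => X i (jseq k)))
    (hβup1 : ∀ k, β (k + 1) (jseq k) =
      β k (jseq k) + ε * Real.sign (∑ i, r k i * X i (jseq k)))
    (hβup2 : ∀ k, ∀ j ≠ jseq k, β (k + 1) j = β k j)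
    -- `β_LS` is a least-squares solution
    (βLS : Fin p → ℝ)
    (hLS : ∀ b : Fin p → ℝ,
      (∑ i, (y i - X.mulVec βLS i) ^ 2) ≤ ∑ i, (y i - X.mulVec b i) ^ 2)
    (k : ℕ) :
    (Finset.range (k + 1)).inf' Finset.nonempty_range_add_one
        (fun i' => ⨆ j, |∑ i, r i' i * X i j|) ≤
      (l2Norm (X.mulVec βLS)) ^ 2 / (2 * ε * ((k : ℝ) + 1)) +
        ε * (⨆ j, l2Norm (fun i => X i j)) ^ 2 / 2 := by
  rcases eq_or_ne p 0 with hp | hp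
  · -- degenerate case: no columns
    subst hp
    have h1 : ∀ (f : Fin 0 → ℝ), (⨆ j, f j) = 0 := fun f => Real.iSup_of_isEmpty f
    have hm : X.mulVec βLS = fun _ => 0 := by
      funext i; simp [Matrix.mulVec, dotProduct]
    have hl2 : l2Norm (X.mulVec βLS) = 0 := by
      simp [l2Norm, hm]
    rw [hl2]
    simp only [h1]
    rw [Finset.inf'_const]
    have hk : (0:ℝ) < 2 * ε * ((k:ℝ) + 1) := by positivity
    positivity
  · haveI : Nonempty (Fin p) := ⟨⟨0, Nat.pos_of_ne_zero hp⟩⟩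
    -- least squares residual
    set rhat : Fin n → ℝ := fun i => y i - X.mulVec βLS i with hrhat
    -- orthogonality of the LS residual to the columns
    have orth : ∀ j, ∑ i, rhat i * X i j = 0 := by
      intro j
      set c := ∑ i, rhat i * X i j with hc
      set A := ∑ i, (X i j)^2 with hA
      have hA0 : 0 ≤ A := Finset.sum_nonneg fun i _ => sq_nonneg _
      have key : ∀ t : ℝ, 0 ≤ A * (t*t) + (-2*c) * t + 0 := by
        intro t
        have h := hLS (βLS + t • (Pi.single j 1 : Fin p → ℝ))
        have hmv : X.mulVec (βLS + t • (Pi.single j 1 : Fin p → ℝ)) =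
            fun i => X.mulVec βLS i + t * X i j := by
          funext i
          rw [Matrix.mulVec_add, Matrix.mulVec_smul, Matrix.mulVec_single]
          simp [mul_comm]
        rw [hmv] at h
        have hexp : ∑ i, (y i - (X.mulVec βLS i + t * X i j)) ^ 2
            = ∑ i, (rhat i)^2 - 2*t*c + t^2 * A := by
          rw [hc, hA, Finset.mul_sum, Finset.mul_sum,
            ← Finset.sum_sub_distrib, ← Finset.sum_add_distrib]
          exact Finset.sum_congr rfl fun i _ => by simp only [hrhat]; ring
        rw [hexp] at h
        nlinarith [h]

      have hd := discrim_le_zero key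
      rw [discrim] at hd
      nlinarith [hd]
    -- notation
    set c : ℕ → ℝ := fun K => ∑ i, r K i * X i (jseq K) with hcdef
    set D : ℕ → ℝ := fun K => ∑ i, (r K i - rhat i)^2 with hDdef
    set M : ℝ := ⨆ j, l2Norm (fun i => X i j) with hMdef
    have hl2sq : ∀ v : Fin n → ℝ, (l2Norm v)^2 = ∑ i, v i ^ 2 := by
      intro v
      exact Real.sq_sqrt (Finset.sum_nonneg fun i _ => sq_nonneg _)
    have hM0 : 0 ≤ M := by
      rw [hMdef]
      refine le_trans (Real.sqrt_nonneg _)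
        (le_ciSup (f := fun j => l2Norm (fun i => X i j))
          (Set.Finite.bddAbove (Set.finite_range _)) (Classical.arbitrary (Fin p)))
    have hAM : ∀ j, ∑ i, (X i j)^2 ≤ M^2 := by
      intro j
      have h1 : l2Norm (fun i => X i j) ≤ M := by
        rw [hMdef]
        exact le_ciSup (f := fun j => l2Norm (fun i => X i j))
          (Set.Finite.bddAbove (Set.finite_range _)) j
      have h2 := hl2sq (fun i => X i j)
      have h0 : 0 ≤ l2Norm (fun i => X i j) := Real.sqrt_nonneg _
      nlinarith [h0, h1, h2]
    -- value of the sup at step K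
    have hmval : ∀ K, (⨆ j, |∑ i, r K i * X i j|) = |c K| := by
      intro K
      refine le_antisymm (ciSup_le (hjseq K)) ?_
      exact le_ciSup (f := fun j => |∑ i, r K i * X i j|)
        (Set.Finite.bddAbove (Set.finite_range _)) (jseq K)
    -- one-step decrease
    have step : ∀ K, D (K+1) ≤ D K - 2*ε*|c K| + ε^2 * M^2 := by
      intro K
      set s : ℝ := Real.sign (c K) with hs
      have hD1 : D (K+1) = D K - 2*(ε*s)*(∑ i, (r K i - rhat i) * X i (jseq K))
          + (ε*s)^2 * (∑ i, (X i (jseq K))^2) := by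
        simp only [hDdef, hrup K, Pi.sub_apply, Pi.smul_apply, smul_eq_mul,
          Finset.mul_sum]
        rw [← Finset.sum_sub_distrib, ← Finset.sum_add_distrib]
        exact Finset.sum_congr rfl fun i _ => by ring
      have hdot : ∑ i, (r K i - rhat i) * X i (jseq K) = c K := by
        simp only [sub_mul]
        rw [Finset.sum_sub_distrib, orth (jseq K), hcdef]
        ring
      have hsc : s * c K = |c K| := by
        rcases lt_trichotomy (c K) 0 with h | h | h
        · rw [hs, Real.sign_of_neg h, abs_of_neg h]; ring
        · rw [h, abs_zero, mul_zero]
        · rw [hs, Real.sign_of_pos h, abs_of_pos h]; ring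
      have hs2 : s^2 ≤ 1 := by
        rcases lt_trichotomy (c K) 0 with h | h | h
        · rw [hs, Real.sign_of_neg h]; norm_num
        · rw [hs, h, Real.sign_zero]; norm_num
        · rw [hs, Real.sign_of_pos h]; norm_num
      have hA0 : (0:ℝ) ≤ ∑ i, (X i (jseq K))^2 :=
        Finset.sum_nonneg fun i _ => sq_nonneg _
      have hAM' := hAM (jseq K)
      rw [hD1, hdot]
      nlinarith [sq_nonneg s, sq_nonneg ε, mul_le_mul_of_nonneg_left hAM' (sq_nonneg (ε*s)),
        mul_le_mul_of_nonneg_right hs2 (mul_nonneg (sq_nonneg ε) (le_trans hA0 hAM'))]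
    -- telescoping
    have tele : ∀ K : ℕ, D K + 2*ε*(∑ i ∈ Finset.range K, |c i|)
        ≤ D 0 + K * (ε^2 * M^2) := by
      intro K
      induction K with
      | zero => simp
      | succ K ih =>
        rw [Finset.sum_range_succ]
        have := step K
        push_cast
        linarith
    have hDpos : 0 ≤ D (k+1) := Finset.sum_nonneg fun i _ => sq_nonneg _
    have hsum : 2*ε*(∑ i ∈ Finset.range (k+1), |c i|)
        ≤ D 0 + ((k:ℝ)+1) * (ε^2 * M^2) := by
      have := tele (k+1)
      push_cast at this
      linarith
    -- D 0 equals ‖X βLS‖²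
    have hD0 : D 0 = (l2Norm (X.mulVec βLS))^2 := by
      rw [hl2sq, hDdef]
      simp only [hr0, hrhat]
      exact Finset.sum_congr rfl fun i _ => by ring
    -- min ≤ average
    set L : ℝ := (Finset.range (k + 1)).inf' Finset.nonempty_range_add_one
        (fun i' => ⨆ j, |∑ i, r i' i * X i j|) with hL
    have hmin : ((k:ℝ)+1) * L ≤ ∑ i ∈ Finset.range (k+1), |c i| := by
      have h := Finset.card_nsmul_le_sum (Finset.range (k+1))
        (fun i' => ⨆ j, |∑ i, r i' i * X i j|) L
        (fun i hi => Finset.inf'_le _ hi)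
      rw [Finset.card_range, nsmul_eq_mul] at h
      push_cast at h
      calc ((k:ℝ)+1) * L ≤ ∑ i ∈ Finset.range (k+1), ⨆ j, |∑ i', r i i' * X i' j| := h
        _ = ∑ i ∈ Finset.range (k+1), |c i| :=
            Finset.sum_congr rfl fun i _ => hmval i
    have hk1 : (0:ℝ) < (k:ℝ) + 1 := by positivity
    have hfinal : 2*ε*(((k:ℝ)+1) * L) ≤ (l2Norm (X.mulVec βLS))^2 + ((k:ℝ)+1)*(ε^2*M^2) := by
      have := mul_le_mul_of_nonneg_left hmin (by positivity : (0:ℝ) ≤ 2*ε)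
      rw [← hD0]
      linarith
    rw [div_add_div _ _ (by positivity : (2*ε*((k:ℝ)+1)) ≠ 0) (by norm_num : (2:ℝ) ≠ 0)]
    rw [le_div_iff₀ (by positivity)]
    ring_nf
    ring_nf at hfinal
    nlinarith [hfinal]
end

section
/- Let β_LS ∈ argmin_β ‖y − Xβ‖_2^2 with Xβ_LS ≠ 0, and suppose the number of iterations k is fixed a priori and FS_ε is run with ε := ‖Xβ_LS‖_2 / (‖X‖_{1,2} √(k+1)). Then: min_{i ∈ {0,...,k}} ‖X^T r^i‖_∞ ≤ ‖X‖_{1,2} ‖Xβ_LS‖_2 / √(k+1), where ‖X‖_{1,2} := max_{j ∈ {1,…,p}} ‖X_j‖_2. -/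
private lemma sign_mul_self' (x : ℝ) : Real.sign x * x = |x| := by
  rcases lt_trichotomy x 0 with h | h | h
  · rw [Real.sign_of_neg h, abs_of_neg h]; ring
  · simp [h]
  · rw [Real.sign_of_pos h, abs_of_pos h]; ring

private lemma sign_sq_le' (x : ℝ) : (Real.sign x)^2 ≤ 1 := by
  rcases lt_trichotomy x 0 with h | h | h
  · rw [Real.sign_of_neg h]; norm_num
  · simp [h]
  · rw [Real.sign_of_pos h]; norm_num

/-- **Complexity of FS_ε with the a-priori optimal shrinkage factor.**
Let `β_LS` be a least-squares solution with `X β_LS ≠ 0`, fix the number of iterations `k`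
a priori, and run FS_ε with `ε = ‖X β_LS‖₂ / (‖X‖₁,₂ √(k+1))`, where `‖X‖₁,₂ = max_j ‖X_j‖₂`.
Then `min_{i ∈ {0,…,k}} ‖Xᵀ rⁱ‖∞ ≤ ‖X‖₁,₂ ‖X β_LS‖₂ / √(k+1)`. -/
theorem FSeps_complexity_optimal_eps {n p : ℕ}
    (X : Matrix (Fin n) (Fin p) ℝ) (hX : X ≠ 0) (y : Fin n → ℝ)
    -- `β_LS` is a least-squares solution with `X β_LS ≠ 0`
    (βLS : Fin p → ℝ)
    (hLS : ∀ b : Fin p → ℝ,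
      (∑ i, (y i - X.mulVec βLS i) ^ 2) ≤ ∑ i, (y i - X.mulVec b i) ^ 2)
    (hXβLS : X.mulVec βLS ≠ 0)
    -- the number of iterations `k` is fixed a priori and `ε` is set accordingly
    (k : ℕ) (ε : ℝ)
    (hε : ε = l2Norm (X.mulVec βLS) / ((⨆ j, l2Norm (fun i => X i j)) * Real.sqrt ((k : ℝ) + 1)))
    -- the FS_ε iterates
    (r : ℕ → Fin n → ℝ) (β : ℕ → Fin p → ℝ) (jseq : ℕ → Fin p)
    (hr0 : r 0 = y) (hβ0 : β 0 = 0)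
    (hjseq : ∀ k j, |∑ i, r k i * X i j| ≤ |∑ i, r k i * X i (jseq k)|)
    (hrup : ∀ k, r (k + 1) =
      r k - (ε * Real.sign (∑ i, r k i * X i (jseq k))) • (fun i => X i (jseq k)))
    (hβup1 : ∀ k, β (k + 1) (jseq k) =
      β k (jseq k) + ε * Real.sign (∑ i, r k i * X i (jseq k)))
    (hβup2 : ∀ k, ∀ j ≠ jseq k, β (k + 1) j = β k j)
    :
    (Finset.range (k + 1)).inf' Finset.nonempty_range_add_one
        (fun i' => ⨆ j, |∑ i, r i' i * X i j|) ≤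
      (⨆ j, l2Norm (fun i => X i j)) * l2Norm (X.mulVec βLS) / Real.sqrt ((k : ℝ) + 1) := by

  haveI : Nonempty (Fin p) := ⟨jseq 0⟩
  set M := ⨆ j, l2Norm (fun i => X i j) with hMdef
  set L := l2Norm (X.mulVec βLS) with hLdef
  set S : ℕ → ℝ := fun i' => ⨆ j, |∑ i, r i' i * X i j| with hSdef
  -- positivity of L
  have hLpos : 0 < L := by
    obtain ⟨a, ha⟩ : ∃ a, X.mulVec βLS a ≠ 0 := by
      by_contra hcon; push_neg at hcon; exact hXβLS (funext hcon)
    rw [hLdef]; unfold l2Norm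
    exact Real.sqrt_pos.mpr (Finset.sum_pos' (fun i _ => sq_nonneg _)
      ⟨a, Finset.mem_univ a, by positivity⟩)
  -- positivity of M
  have hMpos : 0 < M := by
    obtain ⟨a, j, haj⟩ : ∃ a j, X a j ≠ 0 := by
      by_contra hcon; push_neg at hcon
      exact hX (by ext a j; exact hcon a j)
    have h1 : 0 < l2Norm (fun i => X i j) := by
      unfold l2Norm
      exact Real.sqrt_pos.mpr (Finset.sum_pos' (fun i _ => sq_nonneg _)
        ⟨a, Finset.mem_univ a, by positivity⟩)
    exact lt_of_lt_of_le h1 (le_ciSup (f := fun j => l2Norm (fun i => X i j))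
      ((Set.finite_range _).bddAbove) j)
  have hsqpos : 0 < Real.sqrt ((k : ℝ) + 1) := Real.sqrt_pos.mpr (by positivity)
  have hsqsq : Real.sqrt ((k : ℝ) + 1) * Real.sqrt ((k : ℝ) + 1) = (k : ℝ) + 1 :=
    Real.mul_self_sqrt (by positivity)
  have hεpos : 0 < ε := by rw [hε]; positivity
  -- least squares orthogonality: Xᵀ(y - XβLS) = 0
  have orth : ∀ j, (∑ a, (y a - X.mulVec βLS a) * X a j) = 0 := by
    intro j
    set c := ∑ a, (y a - X.mulVec βLS a) * X a j with hc
    set A := ∑ a, (X a j)^2 with hA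
    have hA0 : 0 ≤ A := Finset.sum_nonneg fun a _ => sq_nonneg _
    have key : ∀ t : ℝ, 2*t*c ≤ t^2 * A := by
      intro t
      have h := hLS (βLS + Pi.single j t)
      have hmv : X.mulVec (βLS + Pi.single j t) = fun a => X.mulVec βLS a + X a j * t := by
        rw [Matrix.mulVec_add, Matrix.mulVec_single]; rfl
      rw [hmv] at h
      have expand : ∀ a, (y a - (X.mulVec βLS a + X a j * t))^2
          = (y a - X.mulVec βLS a)^2 - 2*t*((y a - X.mulVec βLS a) * X a j) + t^2*(X a j)^2 := by
        intro a; ring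
      rw [Finset.sum_congr rfl fun a _ => expand a] at h
      rw [Finset.sum_add_distrib, Finset.sum_sub_distrib, ← Finset.mul_sum, ← Finset.mul_sum] at h
      rw [← hc, ← hA] at h
      linarith
    rcases eq_or_lt_of_le hA0 with hA1 | hA1
    · have h := key c
      rw [← hA1] at h
      nlinarith [sq_nonneg c]
    · have h := key (c / A)
      have hcu : c = (c / A) * A := by field_simp
      set u := c / A with hu
      rw [hcu] at h
      have h2 : u ^ 2 * A ≤ 0 := by nlinarith
      have h3 : u ^ 2 ≤ 0 := by
        by_contra h4
        push_neg at h4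
        exact absurd (mul_pos h4 hA1) (not_lt.mpr h2)
      have h5 : u = 0 := by nlinarith [sq_nonneg u]
      rw [hcu, h5, zero_mul]
  -- `d i = X βLS - X β i`, written via residuals
  set d : ℕ → Fin n → ℝ := fun i a => X.mulVec βLS a - y a + r i a with hddef
  -- Xᵀ d i = Xᵀ r i
  have Xtd : ∀ i j, (∑ a, d i a * X a j) = ∑ a, r i a * X a j := by
    intro i j
    have : ∀ a, d i a * X a j = r i a * X a j - (y a - X.mulVec βLS a) * X a j := by
      intro a; simp only [hddef]; ring
    rw [Finset.sum_congr rfl fun a _ => this a, Finset.sum_sub_distrib, orth j, sub_zero]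
  -- S i = achieved max
  have hSach : ∀ i, S i = |∑ a, r i a * X a (jseq i)| := by
    intro i
    refine le_antisymm (ciSup_le fun j => hjseq i j) ?_
    exact le_ciSup (f := fun j => |∑ a, r i a * X a j|)
      ((Set.finite_range _).bddAbove) (jseq i)
  -- column norm bound
  have hcol : ∀ j, (∑ a, (X a j)^2) ≤ M^2 := by
    intro j
    have h1 : l2Norm (fun i => X i j) ≤ M := le_ciSup (f := fun j => l2Norm (fun i => X i j))
      ((Set.finite_range _).bddAbove) j
    have h2 : (l2Norm (fun i => X i j))^2 = ∑ a, (X a j)^2 :=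
      Real.sq_sqrt (Finset.sum_nonneg fun a _ => sq_nonneg _)
    have h3 : 0 ≤ l2Norm (fun i => X i j) := Real.sqrt_nonneg _
    nlinarith
  -- one-step descent
  have step : ∀ i, (∑ a, d (i+1) a ^ 2) ≤ (∑ a, d i a ^ 2) - 2*ε*(S i) + ε^2*M^2 := by
    intro i
    set c := ε * Real.sign (∑ a, r i a * X a (jseq i)) with hcdef
    have hd1 : ∀ a, d (i+1) a = d i a - c * X a (jseq i) := by
      intro a; simp only [hddef, hrup i]; simp [hcdef]; ring
    have expand : ∀ a, d (i+1) a ^ 2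
        = d i a ^2 - 2*c*(d i a * X a (jseq i)) + c^2 * (X a (jseq i))^2 := by
      intro a; rw [hd1 a]; ring
    rw [Finset.sum_congr rfl fun a _ => expand a, Finset.sum_add_distrib,
      Finset.sum_sub_distrib, ← Finset.mul_sum, ← Finset.mul_sum]
    have hmid : 2*c*(∑ a, d i a * X a (jseq i)) = 2*ε*(S i) := by
      rw [Xtd, hSach i, hcdef]
      have := sign_mul_self' (∑ a, r i a * X a (jseq i))
      rw [← this]; ring
    rw [hmid]
    have hc2 : c^2 ≤ ε^2 := by
      rw [hcdef, mul_pow]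
      nlinarith [sign_sq_le' (∑ a, r i a * X a (jseq i)), sq_nonneg ε]
    have hlast : c^2 * (∑ a, (X a (jseq i))^2) ≤ ε^2 * M^2 :=
      mul_le_mul hc2 (hcol _) (Finset.sum_nonneg fun a _ => sq_nonneg _) (sq_nonneg ε)
    linarith
  -- initial value
  have hg0 : (∑ a, d 0 a ^ 2) = L^2 := by
    have : ∀ a, d 0 a = X.mulVec βLS a := by intro a; simp [hddef, hr0]
    rw [Finset.sum_congr rfl fun a _ => by rw [this a]]
    rw [hLdef]; unfold l2Norm
    rw [Real.sq_sqrt (Finset.sum_nonneg fun a _ => sq_nonneg _)]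
  -- telescoping
  have tel : ∀ m, (∑ a, d m a ^ 2) ≤ L^2 - 2*ε*(∑ i ∈ Finset.range m, S i) + m*(ε^2*M^2) := by
    intro m
    induction m with
    | zero => simp [hg0]
    | succ m ih =>
      have := step m
      rw [Finset.sum_range_succ]
      push_cast
      linarith
  -- lower bound on the sum via the min
  set T := (Finset.range (k + 1)).inf' Finset.nonempty_range_add_one S with hTdef
  have hTsum : ((k:ℝ)+1) * T ≤ ∑ i ∈ Finset.range (k+1), S i := by
    have h1 : ∑ i ∈ Finset.range (k+1), T ≤ ∑ i ∈ Finset.range (k+1), S i :=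
      Finset.sum_le_sum fun i hi => Finset.inf'_le S hi
    rw [Finset.sum_const, Finset.card_range, nsmul_eq_mul] at h1
    push_cast at h1
    linarith
  have hpos : (0:ℝ) ≤ ∑ a, d (k+1) a ^ 2 := Finset.sum_nonneg fun a _ => sq_nonneg _
  have htel := tel (k+1)
  -- ε² M² (k+1) = L²
  have hs2 : (Real.sqrt ((k:ℝ)+1))^2 = (k:ℝ)+1 := Real.sq_sqrt (by positivity)
  have hεML : ((k:ℝ)+1) * (ε^2 * M^2) = L^2 := by
    rw [hε, div_pow, mul_pow, hs2]
    field_simp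
  push_cast at htel
  have hfinal : 2*ε*(((k:ℝ)+1) * T) ≤ 2 * L^2 := by
    have h2 : 2*ε*(∑ i ∈ Finset.range (k+1), S i) ≤ L^2 + ((k:ℝ)+1)*(ε^2*M^2) := by linarith
    have h3 : 2*ε*(((k:ℝ)+1) * T) ≤ 2*ε*(∑ i ∈ Finset.range (k+1), S i) :=
      mul_le_mul_of_nonneg_left hTsum (by linarith)
    linarith [hεML]
  -- conclude: T ≤ M * L / √(k+1)
  have hT1 : T ≤ L^2 / (ε*((k:ℝ)+1)) := by
    rw [le_div_iff₀ (by positivity)]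
    nlinarith [hfinal]
  have hden : ε * ((k:ℝ)+1) = L * Real.sqrt ((k:ℝ)+1) / M := by
    rw [hε, div_mul_eq_mul_div, div_eq_div_iff (by positivity) (by positivity)]
    linear_combination (-(L*M)) * hsqsq
  have heq : L^2 / (ε*((k:ℝ)+1)) = M * L / Real.sqrt ((k:ℝ)+1) := by
    rw [hden, div_div_eq_mul_div, div_eq_div_iff (by positivity) (by positivity)]
    ring
  rw [← heq]
  exact hT1
end

section
/- Let β_LS ∈ argmin_β ‖y − Xβ‖_2^2. If the Forward Stagewise algorithm is run with the dynamically chosen shrinkage factor ε_k := |(r^k)^T X_{j_k}| / ‖X_{j_k}‖_2^2 at each iteration k (assuming X_{j_k} ≠ 0), then for all k ≥ 0: min_{i ∈ {0,...,k}} ‖X^T r^i‖_∞ ≤ ‖X‖_{1,2} ‖Xβ_LS‖_2 / √(k+1), where ‖X‖_{1,2} := max_{j ∈ {1,…,p}} ‖X_j‖_2. -/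

private theorem sign_mul_abs' (x : ℝ) : Real.sign x * |x| = x := by
  rcases lt_trichotomy x 0 with h | h | h
  · rw [Real.sign_of_neg h, abs_of_neg h]; ring
  · simp [h]
  · rw [Real.sign_of_pos h, abs_of_pos h, one_mul]

/-- **Complexity of the Forward Stagewise algorithm (dynamic, line-search shrinkage).**
Let `β_LS` be a least-squares solution.  If the Forward Stagewise algorithm is run with the
dynamically chosen shrinkage factor `ε k = |(r k)ᵀ X_{jseq k}| / ‖X_{jseq k}‖₂²` at each
iteration `k` (assuming `X_{jseq k} ≠ 0`), then for all `k ≥ 0`: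
`min_{i ∈ {0,…,k}} ‖Xᵀ rⁱ‖∞ ≤ ‖X‖₁,₂ ‖X β_LS‖₂ / √(k+1)`, where `‖X‖₁,₂ = max_j ‖X_j‖₂`. -/
theorem FS_linesearch_complexity {n p : ℕ}
    (X : Matrix (Fin n) (Fin p) ℝ) (hX : X ≠ 0) (y : Fin n → ℝ)
    (ε : ℕ → ℝ)
    -- the Forward Stagewise iterates
    (r : ℕ → Fin n → ℝ) (β : ℕ → Fin p → ℝ) (jseq : ℕ → Fin p)
    (hr0 : r 0 = y) (hβ0 : β 0 = 0)
    (hjseq : ∀ k j, |∑ i, r k i * X i j| ≤ |∑ i, r k i * X i (jseq k)|)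
    (hrup : ∀ k, r (k + 1) =
      r k - (ε k * Real.sign (∑ i, r k i * X i (jseq k))) • (fun i => X i (jseq k)))
    (hβup1 : ∀ k, β (k + 1) (jseq k) =
      β k (jseq k) + ε k * Real.sign (∑ i, r k i * X i (jseq k)))
    (hβup2 : ∀ k, ∀ j ≠ jseq k, β (k + 1) j = β k j)
    -- the columns selected are nonzero and the shrinkage factor is chosen by line-search
    (hcol : ∀ k, (fun i => X i (jseq k)) ≠ (0 : Fin n → ℝ))
    (hεdef : ∀ k, ε k = |∑ i, r k i * X i (jseq k)| / ∑ i, (X i (jseq k)) ^ 2)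
    -- `β_LS` is a least-squares solution
    (βLS : Fin p → ℝ)
    (hLS : ∀ b : Fin p → ℝ,
      (∑ i, (y i - X.mulVec βLS i) ^ 2) ≤ ∑ i, (y i - X.mulVec b i) ^ 2)
    (k : ℕ) :
    (Finset.range (k + 1)).inf' Finset.nonempty_range_add_one
        (fun i' => ⨆ j, |∑ i, r i' i * X i j|) ≤
      (⨆ j, l2Norm (fun i => X i j)) * l2Norm (X.mulVec βLS) / Real.sqrt ((k : ℝ) + 1) := by
  classical
  -- `p` and `Fin p` are nonempty
  have hp : Nonempty (Fin p) := by
    rcases Nat.eq_zero_or_pos p with h | h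
    · exfalso; apply hX; subst h; funext i j; exact j.elim0
    · exact ⟨⟨0, h⟩⟩
  -- abbreviations
    -- c m = ⟨r m, X_{j_m}⟩, N m = ‖X_{j_m}‖², S m = ‖r m‖²
  set c : ℕ → ℝ := fun m => ∑ i, r m i * X i (jseq m) with hc
  set N : ℕ → ℝ := fun m => ∑ i, (X i (jseq m)) ^ 2 with hNdef
  set S : ℕ → ℝ := fun m => ∑ i, (r m i) ^ 2 with hSdef
  have hεdef' : ∀ m, ε m = |c m| / N m := hεdef
  have hNnonneg : ∀ m, (0:ℝ) ≤ N m := fun m => Finset.sum_nonneg fun i _ => sq_nonneg _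
  have hNpos : ∀ m, 0 < N m := by
    intro m
    have h := hcol m
    have hex : ∃ i, X i (jseq m) ≠ 0 := by
      by_contra hcon
      push_neg at hcon
      exact h (funext hcon)
    obtain ⟨i0, hi0⟩ := hex
    apply Finset.sum_pos' (fun i _ => sq_nonneg _)
    exact ⟨i0, Finset.mem_univ _, by positivity⟩
  -- one-step decrease of the residual norm
  have hstep : ∀ m, S (m + 1) = S m - (c m) ^ 2 / N m := by
    intro m
    have hr := hrup m
    set a : ℝ := ε m * Real.sign (c m) with ha
    have hexp : S (m + 1) = S m - 2 * a * (c m) + a ^ 2 * N m := by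
      have hri : ∀ i, r (m + 1) i = r m i - a * X i (jseq m) := by
        intro i; rw [hr]; rfl
      have : ∀ i, (r (m+1) i) ^ 2 =
          (r m i) ^ 2 - 2 * a * (r m i * X i (jseq m)) + a ^ 2 * (X i (jseq m)) ^ 2 := by
        intro i; rw [hri i]; ring
      simp only [hSdef, hc, hNdef]
      rw [Finset.sum_congr rfl fun i _ => this i]
      rw [Finset.sum_add_distrib, Finset.sum_sub_distrib, ← Finset.mul_sum, ← Finset.mul_sum]
    have hsabs := sign_mul_abs' (c m)
    have hac : a * c m = (c m) ^ 2 / N m := by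
      rw [ha, hεdef' m, div_mul_eq_mul_div, div_mul_eq_mul_div]
      rw [show |c m| * Real.sign (c m) * c m = Real.sign (c m) * |c m| * c m by ring, hsabs]
      ring
    have haa : a ^ 2 * N m = (c m) ^ 2 / N m := by
      have hsq : (Real.sign (c m) * |c m|) ^ 2 = (c m) ^ 2 := by rw [hsabs]
      have hN := (hNpos m).ne'
      rw [ha, hεdef' m, mul_pow, div_pow]
      rw [show |c m| ^ 2 / N m ^ 2 * Real.sign (c m) ^ 2 * N m
          = (Real.sign (c m) * |c m|) ^ 2 * N m / N m ^ 2 by ring, hsq]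
      field_simp
    rw [hexp, show 2 * a * c m = 2 * (a * c m) by ring, hac, haa]; ring
  -- residual identity r m = y - X β m
  have hres : ∀ m, r m = fun i => y i - X.mulVec (β m) i := by
    intro m
    induction m with
    | zero =>
      funext i
      simp [hr0, hβ0, Matrix.mulVec_zero]
    | succ m ih =>
      have hβsucc : β (m + 1) = fun j => β m j +
          (if j = jseq m then ε m * Real.sign (c m) else 0) := by
        funext j
        by_cases hj : j = jseq m
        · subst hj; simp [hβup1 m]; exact Or.inl rfl
        · simp [hj, hβup2 m j hj]
      funext i
      have hri : r (m + 1) i = r m i - (ε m * Real.sign (c m)) * X i (jseq m) := by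
        rw [hrup m]; rfl
      have hmv : X.mulVec (β (m + 1)) i =
          X.mulVec (β m) i + (ε m * Real.sign (c m)) * X i (jseq m) := by
        simp only [hβsucc, Matrix.mulVec, dotProduct]
        rw [show (∑ j, X i j * (β m j + if j = jseq m then ε m * Real.sign (c m) else 0))
            = ∑ j, (X i j * β m j + if j = jseq m then X i j * (ε m * Real.sign (c m)) else 0)
            by refine Finset.sum_congr rfl fun j _ => ?_; by_cases hj : j = jseq m <;>
              simp [hj] <;> ring]
        rw [Finset.sum_add_distrib, Finset.sum_ite_eq' Finset.univ (jseq m)]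
        simp [mul_comm]
      rw [hri, ih, hmv]; ring
  -- the residual norm is always at least the least-squares one
  have hSstar : ∀ m, (∑ i, (y i - X.mulVec βLS i) ^ 2) ≤ S m := by
    intro m
    have := hLS (β m)
    calc (∑ i, (y i - X.mulVec βLS i) ^ 2) ≤ ∑ i, (y i - X.mulVec (β m) i) ^ 2 := hLS (β m)
      _ = S m := by
          show _ = ∑ i, (r m i) ^ 2
          simp only [hres m]
  -- orthogonality: ‖y‖² - ‖r*‖² ≤ ‖XβLS‖²
  set w : Fin n → ℝ := X.mulVec βLS with hw
  set L2 : ℝ := ∑ i, (w i) ^ 2 with hL2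
  have hL2nonneg : (0:ℝ) ≤ L2 := Finset.sum_nonneg fun i _ => sq_nonneg _
  have horth : (∑ i, (y i) ^ 2) - (∑ i, (y i - w i) ^ 2) ≤ L2 := by
    have hcst : (∑ i, (y i - w i) * w i) = 0 := by
      by_cases hL : L2 = 0
      · have h0 : (∑ i, (w i) ^ 2) = 0 := hL
        have hwz : ∀ i, w i = 0 := by
          intro i
          have := (Finset.sum_eq_zero_iff_of_nonneg
            (fun i _ => sq_nonneg (w i))).mp h0 i (Finset.mem_univ i)
          exact pow_eq_zero_iff (two_ne_zero) |>.mp this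
        apply Finset.sum_eq_zero
        intro i _
        simp [hwz i]
      · set cst : ℝ := ∑ i, (y i - w i) * w i with hcst'
        by_contra hne
        have hLpos : 0 < L2 := lt_of_le_of_ne hL2nonneg (Ne.symm hL)
        set t : ℝ := cst / L2 with ht
        have hb := hLS ((1 + t) • βLS)
        have hmv : X.mulVec ((1 + t) • βLS) = (1 + t) • w := by
          rw [hw, Matrix.mulVec_smul]
        rw [hmv] at hb
        have hexp : (∑ i, (y i - ((1 + t) • w) i) ^ 2)
            = (∑ i, (y i - w i) ^ 2) - 2 * t * cst + t ^ 2 * L2 := by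
          have : ∀ i, (y i - ((1 + t) • w) i) ^ 2
              = (y i - w i) ^ 2 - 2 * t * ((y i - w i) * w i) + t ^ 2 * (w i) ^ 2 := by
            intro i; simp only [Pi.smul_apply, smul_eq_mul]; ring
          rw [Finset.sum_congr rfl fun i _ => this i, Finset.sum_add_distrib,
            Finset.sum_sub_distrib, ← Finset.mul_sum, ← Finset.mul_sum, hcst', hL2]
        rw [hexp] at hb
        have ht2 : t ^ 2 * L2 = cst ^ 2 / L2 := by
          rw [ht]; field_simp
        have ht1 : 2 * t * cst = 2 * (cst ^ 2 / L2) := by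
          rw [ht]; field_simp
        rw [ht1, ht2] at hb
        have : cst ^ 2 / L2 ≤ 0 := by linarith
        have : cst ^ 2 ≤ 0 := by
          rw [div_le_iff₀ hLpos] at this; linarith
        exact hne (pow_eq_zero_iff (by norm_num) |>.mp (le_antisymm this (sq_nonneg _)))
    have : ∀ i, (y i) ^ 2 = (y i - w i) ^ 2 + 2 * ((y i - w i) * w i) + (w i) ^ 2 := by
      intro i; ring
    rw [Finset.sum_congr rfl fun i _ => this i, Finset.sum_add_distrib,
      Finset.sum_add_distrib, ← Finset.mul_sum, hcst]
    simp [hL2]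
  -- telescoping
  have htel : (∑ m ∈ Finset.range (k + 1), (c m) ^ 2 / N m) ≤ L2 := by
    have h1 : (∑ m ∈ Finset.range (k + 1), (c m) ^ 2 / N m) = S 0 - S (k + 1) := by
      rw [show (fun m => (c m) ^ 2 / N m) = fun m => S m - S (m + 1) by
        funext m; rw [hstep m]; ring]
      exact Finset.sum_range_sub' S (k + 1)
    have hS0 : S 0 = ∑ i, (y i) ^ 2 := by
      show (∑ i, (r 0 i) ^ 2) = _
      simp [hr0]
    have := hSstar (k + 1)
    rw [h1, hS0]
    have hw' : (∑ i, (y i - w i) ^ 2) ≤ S (k+1) := hSstar (k+1)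
    linarith
  -- the sup over columns equals |c m|
  have hg_eq : ∀ m, (⨆ j, |∑ i, r m i * X i j|) = |c m| := by
    intro m
    apply le_antisymm
    · exact ciSup_le fun j => hjseq m j
    · exact le_ciSup (f := fun j => |∑ i, r m i * X i j|)
        (Set.Finite.bddAbove (Set.finite_range _)) (jseq m)
  -- the matrix norm M
  set M : ℝ := ⨆ j, l2Norm (fun i => X i j) with hM
  have hMge : ∀ j, l2Norm (fun i => X i j) ≤ M :=
    fun j => le_ciSup (f := fun j => l2Norm (fun i => X i j))
      (Set.Finite.bddAbove (Set.finite_range _)) j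
  have hMpos : 0 < M := by
    have h1 : l2Norm (fun i => X i (jseq 0)) ≤ M := hMge (jseq 0)
    have h2 : 0 < l2Norm (fun i => X i (jseq 0)) := by
      rw [l2Norm, Real.sqrt_pos]; exact hNpos 0
    linarith
  have hNleM : ∀ m, N m ≤ M ^ 2 := by
    intro m
    have h1 : Real.sqrt (N m) ≤ M := hMge (jseq m)
    calc N m = Real.sqrt (N m) ^ 2 := (Real.sq_sqrt (hNnonneg m)).symm
      _ ≤ M ^ 2 := pow_le_pow_left₀ (Real.sqrt_nonneg _) h1 2
  -- the min
  set mb : ℝ := (Finset.range (k + 1)).inf' Finset.nonempty_range_add_one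
      (fun i' => ⨆ j, |∑ i, r i' i * X i j|) with hmb
  have hmble : ∀ m ∈ Finset.range (k + 1), mb ≤ |c m| := by
    intro m hm
    have := Finset.inf'_le (fun i' => ⨆ j, |∑ i, r i' i * X i j|) hm
    rwa [hg_eq m] at this
  have hmbnonneg : 0 ≤ mb := by
    rw [hmb]
    apply Finset.le_inf'
    intro m _
    rw [hg_eq m]; exact abs_nonneg _
  -- per-term bound : mb² ≤ (c m²/N m) * M²
  have hterm : ∀ m ∈ Finset.range (k + 1), mb ^ 2 ≤ ((c m) ^ 2 / N m) * M ^ 2 := by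
    intro m hm
    have h1 : mb ^ 2 ≤ (c m) ^ 2 := by
      rw [← sq_abs (c m)]
      exact pow_le_pow_left₀ hmbnonneg (hmble m hm) 2
    have h2 : (c m) ^ 2 = ((c m) ^ 2 / N m) * N m :=
      (div_mul_cancel₀ _ (hNpos m).ne').symm
    calc mb ^ 2 ≤ (c m) ^ 2 := h1
      _ = ((c m) ^ 2 / N m) * N m := h2
      _ ≤ ((c m) ^ 2 / N m) * M ^ 2 := by
          apply mul_le_mul_of_nonneg_left (hNleM m)
          positivity
  -- sum up
  have hsum : ((k : ℝ) + 1) * mb ^ 2 ≤ L2 * M ^ 2 := by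
    have h1 : (∑ _m ∈ Finset.range (k + 1), mb ^ 2)
        ≤ ∑ m ∈ Finset.range (k + 1), ((c m) ^ 2 / N m) * M ^ 2 :=
      Finset.sum_le_sum hterm
    rw [Finset.sum_const, Finset.card_range, nsmul_eq_mul, ← Finset.sum_mul] at h1
    push_cast at h1 ⊢
    have h2 : (∑ m ∈ Finset.range (k + 1), (c m) ^ 2 / N m) * M ^ 2 ≤ L2 * M ^ 2 :=
      mul_le_mul_of_nonneg_right htel (sq_nonneg M)
    linarith
  -- conclude
  have hk1pos : (0:ℝ) < (k : ℝ) + 1 := by positivity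
  have hsqrtpos : 0 < Real.sqrt ((k : ℝ) + 1) := Real.sqrt_pos.mpr hk1pos
  rw [le_div_iff₀ hsqrtpos]
  have hL : l2Norm w = Real.sqrt L2 := by simp only [l2Norm, hL2]
  have hLnonneg : 0 ≤ l2Norm w := by rw [hL]; exact Real.sqrt_nonneg _
  have hrhs : 0 ≤ M * l2Norm w := mul_nonneg hMpos.le hLnonneg
  have hlhs : 0 ≤ mb * Real.sqrt ((k:ℝ) + 1) := mul_nonneg hmbnonneg hsqrtpos.le
  rw [← Real.sqrt_sq hlhs, ← Real.sqrt_sq hrhs]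
  apply Real.sqrt_le_sqrt
  have e1 : (mb * Real.sqrt ((k:ℝ) + 1)) ^ 2 = ((k:ℝ) + 1) * mb ^ 2 := by
    rw [mul_pow, Real.sq_sqrt hk1pos.le]; ring
  have e2 : (M * l2Norm w) ^ 2 = L2 * M ^ 2 := by
    rw [mul_pow, hL, Real.sq_sqrt hL2nonneg]; ring
  rw [e1, e2]
  exact hsum
end
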